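/- The greedy construction of the left-most good branch is correct: define β recursively starting at the root by, at each node v, descending to the left child if some good branch of t passes through the left child of v, and otherwise to the right child. If t has at least one good branch, then the branch β so constructed is itself a good branch of t, and no good branch of t lies strictly to its left. -/

import Mathlib

open Classical

/-- Infinite binary trees over {a,b}; `true` = a, `false` = b. -/
abbrev Tree2 := List (Fin 2) → Bool

/-- The length-`n` prefix of a branch. -/
def pre (β : ℕ → Fin 2) (n : ℕ) : List (Fin 2) := List.ofFn (fun i : Fin n => β i)

/-- A branch is good: all its finite prefixes are labelled `a` and it turns left (0)
infinitely often. -/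
def Good (t : Tree2) (β : ℕ → Fin 2) : Prop :=
  (∀ n, t (pre β n) = true) ∧ (∀ m, ∃ n ≥ m, β n = 0)

/-- `β` is strictly to the left of `γ`. -/
def LeftOf (β γ : ℕ → Fin 2) : Prop :=
  ∃ n, (∀ i < n, β i = γ i) ∧ β n = 0 ∧ γ n = 1

/-- A branch passes through a node. -/
def Through (γ : ℕ → Fin 2) (v : List (Fin 2)) : Prop := pre γ v.length = v
/-- The greedy prefix: descend left iff some good branch passes through the left child. -/
noncomputable def greedyPre (t : Tree2) : ℕ → List (Fin 2)
  | 0 => []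
  | n + 1 => greedyPre t n ++
      [if ∃ γ, Good t γ ∧ Through γ (greedyPre t n ++ [(0 : Fin 2)]) then (0 : Fin 2) else 1]

/-- The greedily constructed branch. -/
noncomputable def greedy (t : Tree2) (n : ℕ) : Fin 2 :=
  if ∃ γ, Good t γ ∧ Through γ (greedyPre t n ++ [(0 : Fin 2)]) then 0 else 1

/-! Greedy descent keeps the invariant that the current node lies on a good branch: it turns
right only when no good branch passes through the left child, and then every good branch
through the current node turns right with it. If the greedy branch turned left only finitely
often, a good branch through the node where its last left turn happened would be forced to
follow it forever after, and so would turn left only finitely often as well. -/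

section Prefixes

variable (β γ : ℕ → Fin 2) (n : ℕ)

@[simp]
lemma length_pre : (pre β n).length = n := by
  simp [pre]

lemma pre_succ : pre β (n + 1) = pre β n ++ [β n] := by
  rw [pre, pre, List.ofFn_succ']
  simp [List.concat_eq_append]

variable {β γ}

lemma pre_eq_pre_iff : pre γ n = pre β n ↔ ∀ i < n, γ i = β i := by
  simp only [pre, List.ofFn_inj, funext_iff, Fin.forall_iff]

lemma through_pre_iff : Through γ (pre β n) ↔ pre γ n = pre β n := by
  rw [Through, length_pre]

lemma through_append_singleton {v : List (Fin 2)} {b : Fin 2} :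
    Through γ (v ++ [b]) ↔ Through γ v ∧ γ v.length = b := by
  simp [Through, pre_succ]

end Prefixes

def OnGoodBranch (t : Tree2) (v : List (Fin 2)) : Prop := ∃ γ, Good t γ ∧ Through γ v

section Greedy

variable {t : Tree2} {γ : ℕ → Fin 2} {n : ℕ}

lemma greedyPre_succ (t : Tree2) (n : ℕ) : greedyPre t (n + 1) = greedyPre t n ++ [greedy t n] :=
  rfl

lemma greedyPre_eq_pre (t : Tree2) (n : ℕ) : greedyPre t n = pre (greedy t) n := by
  induction n with
  | zero => rfl
  | succ n ih => rw [greedyPre_succ, pre_succ, ih]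

lemma greedy_eq_zero_iff : greedy t n = 0 ↔ OnGoodBranch t (greedyPre t n ++ [0]) := by
  unfold greedy OnGoodBranch
  split_ifs with h <;> simp [h]

lemma greedy_eq_zero_of_through (hγ : Good t γ) (hthrough : Through γ (greedyPre t n))
    (hleft : γ n = 0) : greedy t n = 0 :=
  greedy_eq_zero_iff.2 ⟨γ, hγ, through_append_singleton.2 ⟨hthrough, by simpa [greedyPre_eq_pre]⟩⟩

lemma greedy_eq_of_through_succ (hthrough : Through γ (greedyPre t (n + 1))) :
    γ n = greedy t n := by
  rw [greedyPre_succ, through_append_singleton, greedyPre_eq_pre, length_pre] at hthrough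
  exact hthrough.2

lemma through_greedyPre_succ (hγ : Good t γ) (hthrough : Through γ (greedyPre t n))
    (hright : greedy t n = 1) : Through γ (greedyPre t (n + 1)) := by
  have hγn : γ n = 1 := by
    by_contra hne
    have := greedy_eq_zero_of_through hγ hthrough (by omega)
    simp_all
  rw [greedyPre_succ, through_append_singleton, greedyPre_eq_pre, length_pre, hright]
  exact ⟨greedyPre_eq_pre t n ▸ hthrough, hγn⟩

lemma onGoodBranch_greedyPre (h : ∃ γ, Good t γ) (n : ℕ) : OnGoodBranch t (greedyPre t n) := by
  induction n with
  | zero =>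
    obtain ⟨γ, hγ⟩ := h
    exact ⟨γ, hγ, rfl⟩
  | succ n ih =>
    obtain ⟨γ, hγ, hthrough⟩ := ih
    rcases Fin.exists_fin_two.mp ⟨greedy t n, rfl⟩ with hleft | hright
    · simpa [greedyPre_succ, hleft] using greedy_eq_zero_iff.1 hleft
    · exact ⟨γ, hγ, through_greedyPre_succ hγ hthrough hright⟩

lemma through_greedyPre_of_forall_right (hγ : Good t γ) {m : ℕ}
    (hthrough : Through γ (greedyPre t m)) (hright : ∀ k ≥ m, greedy t k = 1) :
    ∀ k ≥ m, Through γ (greedyPre t k) := by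
  intro k hk
  induction k, hk using Nat.le_induction with
  | base => exact hthrough
  | succ k hk ih => exact through_greedyPre_succ hγ ih (hright k hk)

lemma good_greedy (h : ∃ γ, Good t γ) : Good t (greedy t) := by
  refine ⟨fun n => ?_, fun m => ?_⟩
  · obtain ⟨γ, hγ, hthrough⟩ := onGoodBranch_greedyPre h n
    rw [greedyPre_eq_pre, through_pre_iff] at hthrough
    exact hthrough ▸ hγ.1 n
  · by_contra! hright
    replace hright : ∀ k ≥ m, greedy t k = 1 := fun k hk => by have := hright k hk; omega
    obtain ⟨γ, hγ, hthrough⟩ := onGoodBranch_greedyPre h m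
    obtain ⟨k, hk, hγk⟩ := hγ.2 m
    have := greedy_eq_of_through_succ
      (through_greedyPre_of_forall_right hγ hthrough hright (k + 1) (by omega))
    simp [hright k hk, hγk] at this

lemma not_leftOf_greedy (hγ : Good t γ) : ¬ LeftOf γ (greedy t) := by
  rintro ⟨n, hagree, hγn, hgreedy⟩
  have hthrough : Through γ (greedyPre t n) := by
    rwa [greedyPre_eq_pre, through_pre_iff, pre_eq_pre_iff]
  simp [greedy_eq_zero_of_through hγ hthrough hγn] at hgreedy

end Greedy

/-- The greedy construction is correct: if `t` has a good branch then the greedily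
constructed branch is good, and no good branch lies strictly to its left. -/
theorem greedy_is_leftmost_good (t : Tree2) (h : ∃ γ, Good t γ) :
    Good t (greedy t) ∧ ∀ γ, Good t γ → ¬ LeftOf γ (greedy t) :=
  ⟨good_greedy h, fun _ => not_leftOf_greedy⟩
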